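/- arXiv:1609.06435 — 7 statements merged into one kernel-verified Lean document; each statement's English description precedes it below -/
import Mathlib

section
/- Let z1, z2 be linearly independent vectors in EuclideanSpace ℝ (Fin 2) and set z3 = -z1 - z2. Define the real 3×3 matrix M by M = ![![‖z1‖², 0, -⟪z1, z3⟫], ![-⟪z2, z1⟫, ‖z2‖², 0], ![0, -⟪z3, z2⟫, ‖z3‖²]], where ⟪·,·⟫ is the real inner product. Then every complex eigenvalue of M (i.e., every root in ℂ of the characteristic polynomial of M viewed as a complex matrix) has strictly positive real part; equivalently, the matrix Z = -M is Hurwitz. -/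
/-!
Expanding the determinant, the characteristic polynomial of `M` is
`X³ - (a + b + c) X² + (ab + bc + ca) X - (abc - pqr)` with `a, b, c` the squared side lengths
and `p, q, r` the inner products of consecutive sides. Any two sides of a triangle have the same
Gram determinant, positive by strict Cauchy–Schwarz, so `p² < ab`, `q² < bc`, `r² < ca`. Hence
`|pqr| < abc`, which gives the Routh–Hurwitz conditions for the cubic: all its roots lie in the
open right half-plane.
-/

open scoped InnerProductSpace
open Polynomial

section InnerProduct

variable {F : Type*} [NormedAddCommGroup F] [InnerProductSpace ℝ F]

theorem sq_inner_lt_of_linearIndependent {x y : F} (h : LinearIndependent ℝ ![x, y]) :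
    ⟪x, y⟫_ℝ ^ 2 < ‖x‖ ^ 2 * ‖y‖ ^ 2 := by
  rw [← mul_pow]
  refine lt_of_le_of_ne (sq_le_sq' (abs_le.mp (abs_real_inner_le_norm x y)).1
    (abs_le.mp (abs_real_inner_le_norm x y)).2) fun heq => ?_
  have habs : ‖⟪x, y⟫_ℝ‖ = ‖x‖ * ‖y‖ := by
    rw [Real.norm_eq_abs, (sq_eq_sq_iff_abs_eq_abs _ _).mp heq, abs_of_nonneg (by positivity)]
  have hx : x ≠ 0 := by simpa using h.ne_zero 0
  have hy : y ≠ 0 := by simpa using h.ne_zero 1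
  obtain ⟨r, -, rfl⟩ := (norm_inner_eq_norm_iff hx hy).mp habs
  have := (LinearIndependent.pair_iff.mp h r (-1) (by simp)).2
  norm_num at this

theorem gram_det_eq_of_add_add_eq_zero {x y z : F} (h : x + y + z = 0) :
    ‖y‖ ^ 2 * ‖z‖ ^ 2 - ⟪y, z⟫_ℝ ^ 2 = ‖x‖ ^ 2 * ‖y‖ ^ 2 - ⟪x, y⟫_ℝ ^ 2 := by
  rw [eq_neg_of_add_eq_zero_right h, norm_neg, inner_neg_right, neg_sq, norm_add_sq_real,
    inner_add_right, real_inner_self_eq_norm_sq, real_inner_comm x y]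
  ring

end InnerProduct

theorem Matrix.charpoly_cyclic {R : Type*} [CommRing R] (a b c p q r : R) :
    (!![a, 0, -r; -p, b, 0; 0, -q, c]).charpoly =
      X ^ 3 - C (a + b + c) * X ^ 2 + C (a * b + b * c + c * a) * X
        - C (a * b * c - p * q * r) := by
  rw [Matrix.charpoly, Matrix.det_fin_three]
  simp
  ring

theorem Complex.re_pos_of_aeval_cubic_eq_zero {s e d : ℝ} (he : 0 < e) (hd : 0 < d)
    (hsed : d < s * e) {μ : ℂ}
    (hμ : aeval μ (X ^ 3 - C s * X ^ 2 + C e * X - C d) = 0) : 0 < μ.re := by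
  have hs : 0 < s := pos_of_mul_pos_left (hd.trans hsed) he.le
  have hμ' : μ * μ * μ - s * (μ * μ) + e * μ - d = 0 := by
    simpa [Complex.coe_algebraMap, pow_succ] using hμ
  have hre := congrArg Complex.re hμ'
  have him := congrArg Complex.im hμ'
  obtain ⟨x, y⟩ := μ
  simp only [Complex.mul_re, Complex.mul_im, Complex.sub_re, Complex.sub_im, Complex.add_re,
    Complex.add_im, Complex.ofReal_re, Complex.ofReal_im, Complex.zero_re, Complex.zero_im]
    at hre him
  dsimp only
  by_contra! hx
  have him' : y * (3 * x ^ 2 - y ^ 2 - 2 * s * x + e) = 0 := by linear_combination him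
  rcases mul_eq_zero.mp him' with rfl | hy
  · nlinarith [mul_nonneg (neg_nonneg.2 hx) (sq_nonneg x), mul_nonneg hs.le (sq_nonneg x),
      mul_nonpos_of_nonneg_of_nonpos he.le hx]
  · -- a non-real root: eliminating `y²` between the real and imaginary parts
    have hgap : s * e - d = 2 * x * ((2 * x - s) ^ 2 + e) := by
      linear_combination hre + (s - 3 * x) * hy
    nlinarith [mul_nonpos_of_nonpos_of_nonneg hx (by positivity : 0 ≤ (2 * x - s) ^ 2 + e)]

theorem routh_hurwitz_conditions_of_sq_lt_mul {a b c p q r : ℝ}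
    (ha : 0 < a) (hb : 0 < b) (hc : 0 < c)
    (hp : p ^ 2 < a * b) (hq : q ^ 2 < b * c) (hr : r ^ 2 < c * a) :
    0 < a * b * c - p * q * r ∧
      a * b * c - p * q * r < (a + b + c) * (a * b + b * c + c * a) := by
  have hpq : p ^ 2 * q ^ 2 < a * b * (b * c) := mul_lt_mul'' hp hq (sq_nonneg p) (sq_nonneg q)
  have hpqr : (p * q * r) ^ 2 < (a * b * c) ^ 2 := by
    calc (p * q * r) ^ 2 = p ^ 2 * q ^ 2 * r ^ 2 := by ring
      _ < a * b * (b * c) * (c * a) := mul_lt_mul'' hpq hr (by positivity) (sq_nonneg r)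
      _ = (a * b * c) ^ 2 := by ring
  obtain ⟨hlow, hup⟩ := abs_lt_of_sq_lt_sq' hpqr (by positivity)
  refine ⟨by linarith, ?_⟩
  nlinarith [mul_pos (mul_pos ha hb) hc, mul_pos (mul_pos ha ha) hb, mul_pos (mul_pos ha ha) hc,
    mul_pos (mul_pos hb hb) ha, mul_pos (mul_pos hb hb) hc, mul_pos (mul_pos hc hc) ha,
    mul_pos (mul_pos hc hc) hb]

theorem stmt_0 (z1 z2 z3 : EuclideanSpace ℝ (Fin 2))
    (hind : LinearIndependent ℝ ![z1, z2])
    (hz3 : z3 = -z1 - z2)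
    (M : Matrix (Fin 3) (Fin 3) ℝ)
    (hM : M = !![‖z1‖ ^ 2, 0, -⟪z1, z3⟫_ℝ;
                 -⟪z2, z1⟫_ℝ, ‖z2‖ ^ 2, 0;
                 0, -⟪z3, z2⟫_ℝ, ‖z3‖ ^ 2]) :
    ∀ μ : ℂ, (Matrix.charpoly (M.map ((↑) : ℝ → ℂ))).IsRoot μ → 0 < μ.re := by
  intro μ hroot
  change (M.map (algebraMap ℝ ℂ)).charpoly.IsRoot μ at hroot
  rw [Matrix.charpoly_map, IsRoot, eval_map_algebraMap, hM, Matrix.charpoly_cyclic] at hroot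
  have hsum : z1 + z2 + z3 = 0 := by rw [hz3]; abel
  have hgram23 := gram_det_eq_of_add_add_eq_zero hsum
  have hgram31 := gram_det_eq_of_add_add_eq_zero (by rw [← hsum]; abel : z2 + z3 + z1 = 0)
  have hgram12 := sq_inner_lt_of_linearIndependent hind
  rw [real_inner_comm z3 z2] at hgram23 hgram31
  rw [real_inner_comm z1 z3] at hgram31
  have ha : 0 < ‖z1‖ ^ 2 := pow_pos (norm_pos_iff.mpr (hind.ne_zero 0)) 2
  have hb : 0 < ‖z2‖ ^ 2 := pow_pos (norm_pos_iff.mpr (hind.ne_zero 1)) 2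
  have hc : 0 < ‖z3‖ ^ 2 := by nlinarith
  obtain ⟨hd, hsed⟩ := routh_hurwitz_conditions_of_sq_lt_mul
    (p := ⟪z2, z1⟫_ℝ) (q := ⟪z3, z2⟫_ℝ) (r := ⟪z1, z3⟫_ℝ) ha hb hc
    (by rwa [real_inner_comm]) (by linarith) (by linarith)
  exact Complex.re_pos_of_aeval_cubic_eq_zero (by positivity) hd hsed hroot
end

section
/- Let z1, z2 be linearly independent vectors in EuclideanSpace ℝ (Fin 2) and set z3 = -z1 - z2. Define the real 3×3 matrix A by A = ![![‖z1‖², 0, 0], ![-⟪z2, z1⟫, ‖z2‖², -⟪z2, z3⟫], ![0, -⟪z3, z2⟫, ‖z3‖²]], where ⟪·,·⟫ is the real inner product. Then every complex eigenvalue of A (i.e., every root in ℂ of the characteristic polynomial of A viewed as a complex matrix) has strictly positive real part; equivalently, the matrix Z = -A is Hurwitz. -/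
/-!
The first row of `A` is `(‖z1‖², 0, 0)`, so its characteristic polynomial factors as
`(X - ‖z1‖²)` times that of the lower-right `2 × 2` block. That block is the Gram matrix of
`z2` and `-z3 = z1 + z2`, which are linearly independent; it is therefore positive definite, and
all its eigenvalues are real and positive.
-/

open scoped InnerProductSpace
open Polynomial Matrix

theorem Matrix.charpoly_eq_X_sub_C_mul_charpoly_submatrix_succ {R : Type*} [CommRing R] {n : ℕ}
    (M : Matrix (Fin (n + 1)) (Fin (n + 1)) R) (h : ∀ j : Fin n, M 0 j.succ = 0) :
    M.charpoly = (X - C (M 0 0)) * (M.submatrix Fin.succ Fin.succ).charpoly := by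
  have hminor : (charmatrix M).submatrix Fin.succ (Fin.succAbove 0) =
      charmatrix (M.submatrix Fin.succ Fin.succ) := by
    ext i j
    simp [charmatrix_apply, diagonal_apply]
  rw [charpoly, det_succ_row_zero, Fin.sum_univ_succ, hminor]
  simp [h, charpoly, (Fin.succ_ne_zero _).symm]

theorem Matrix.PosDef.re_pos_of_isRoot_charpoly_map {n : Type*} [Fintype n] [DecidableEq n]
    {B : Matrix n n ℝ} (hB : B.PosDef) {μ : ℂ}
    (hμ : (B.charpoly.map Complex.ofRealHom).IsRoot μ) : 0 < μ.re := by
  rw [hB.isHermitian.charpoly_eq, Polynomial.map_prod, IsRoot, eval_prod,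
    Finset.prod_eq_zero_iff] at hμ
  obtain ⟨i, -, hi⟩ := hμ
  simp only [Polynomial.map_sub, map_X, map_C, eval_sub, eval_X, eval_C, sub_eq_zero] at hi
  simpa [hi] using hB.eigenvalues_pos i

theorem stmt_1 (z1 z2 z3 : EuclideanSpace ℝ (Fin 2))
    (hind : LinearIndependent ℝ ![z1, z2])
    (hz3 : z3 = -z1 - z2)
    (A : Matrix (Fin 3) (Fin 3) ℝ)
    (hA : A = !![‖z1‖ ^ 2, 0, 0;
                 -⟪z2, z1⟫_ℝ, ‖z2‖ ^ 2, -⟪z2, z3⟫_ℝ;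
                 0, -⟪z3, z2⟫_ℝ, ‖z3‖ ^ 2]) :
    ∀ μ : ℂ, (Matrix.charpoly (A.map ((↑) : ℝ → ℂ))).IsRoot μ → 0 < μ.re := by
  intro μ hμ
  have hrow : ∀ j : Fin 2, A 0 j.succ = 0 := by
    intro j
    fin_cases j <;> simp [hA]
  have hblock : A.submatrix Fin.succ Fin.succ = gram ℝ ![z2, -z3] := by
    ext i j
    fin_cases i <;> fin_cases j <;> simp [hA, gram_apply]
  have hgram : (gram ℝ ![z2, -z3]).PosDef := by
    refine posDef_gram_of_linearIndependent ?_
    rwa [hz3, neg_sub, sub_neg_eq_add, LinearIndependent.pair_add_right_iff,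
      LinearIndependent.pair_symm_iff]
  rw [show A.map ((↑) : ℝ → ℂ) = A.map Complex.ofRealHom from rfl, charpoly_map,
    A.charpoly_eq_X_sub_C_mul_charpoly_submatrix_succ hrow, Polynomial.map_mul, IsRoot,
    eval_mul, mul_eq_zero, hblock] at hμ
  rcases hμ with hμ | hμ
  · simp only [Polynomial.map_sub, map_X, map_C, eval_sub, eval_X, eval_C, sub_eq_zero] at hμ
    have hz1 : z1 ≠ 0 := by simpa using hind.ne_zero 0
    have hA00 : A 0 0 = ‖z1‖ ^ 2 := by simp [hA]
    rw [hμ, Complex.ofRealHom_eq_coe, Complex.ofReal_re, hA00]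
    exact pow_pos (norm_pos_iff.mpr hz1) 2
  · exact hgram.re_pos_of_isRoot_charpoly_map hμ
end

section
/- Let n be a natural number and let M be a real n×n matrix such that every complex eigenvalue of M (every root in ℂ of its characteristic polynomial) has strictly positive real part. Let u, v be linearly independent vectors in EuclideanSpace ℝ (Fin 2), let C be the real 2×2 matrix C = ![![‖u‖², -⟪u, v⟫], ![-⟪v, u⟫, ‖v‖²]], and let B be an arbitrary real 2×n matrix. Then every complex eigenvalue of the (n+2)×(n+2) block lower-triangular matrix Matrix.fromBlocks M 0 B C has strictly positive real part. -/
/-!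
The characteristic polynomial of a block lower-triangular matrix is the product of those of its
diagonal blocks, so it suffices that the new `2 × 2` block `C` has its eigenvalues in the open
right half-plane. `C` has the same trace and determinant as the Gram matrix of `u, v`, which is
positive definite by linear independence; and a real quadratic `X² - t X + d` with `t, d > 0`
has only roots of positive real part.
-/

open scoped InnerProductSpace
open Polynomial

namespace Matrix

variable {m n : Type*} [Fintype m] [Fintype n] [DecidableEq m] [DecidableEq n]

def IsPositiveStable (A : Matrix n n ℝ) : Prop :=
  ∀ μ : ℂ, (A.map ((↑) : ℝ → ℂ)).charpoly.IsRoot μ → 0 < μ.re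

theorem IsPositiveStable.fromBlocks_zero₁₂ {A : Matrix m m ℝ} {D : Matrix n n ℝ}
    (hA : A.IsPositiveStable) (hD : D.IsPositiveStable) (B : Matrix n m ℝ) :
    (fromBlocks A 0 B D).IsPositiveStable := by
  intro μ hμ
  rw [fromBlocks_map, Matrix.map_zero _ Complex.ofReal_zero, charpoly_fromBlocks_zero₁₂,
    IsRoot, eval_mul, mul_eq_zero] at hμ
  exact hμ.elim (hA μ) (hD μ)

end Matrix

theorem Complex.re_pos_of_sq_sub_mul_add_eq_zero {t d : ℝ} (ht : 0 < t) (hd : 0 < d) {μ : ℂ}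
    (hμ : μ ^ 2 - t * μ + d = 0) : 0 < μ.re := by
  have hre := congrArg Complex.re hμ
  have him := congrArg Complex.im hμ
  simp only [sq, add_re, sub_re, mul_re, ofReal_re, ofReal_im, add_im, sub_im, mul_im,
    zero_re, zero_im] at hre him
  rcases eq_or_ne μ.im 0 with hreal | hnonreal
  · rw [hreal] at hre
    nlinarith [sq_nonneg μ.re]
  · -- a non-real root is one of a conjugate pair with sum `t`
    have hsum : 2 * μ.re = t := mul_left_cancel₀ hnonreal (by linarith)
    linarith

theorem Matrix.isPositiveStable_of_trace_pos_of_det_pos {A : Matrix (Fin 2) (Fin 2) ℝ}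
    (htr : 0 < A.trace) (hdet : 0 < A.det) : A.IsPositiveStable := by
  intro μ hμ
  change (A.map Complex.ofRealHom).charpoly.IsRoot μ at hμ
  rw [charpoly_map, charpoly_fin_two, IsRoot, eval_map, eval₂_add, eval₂_sub, eval₂_mul,
    eval₂_X_pow, eval₂_X, eval₂_C, eval₂_C] at hμ
  exact Complex.re_pos_of_sq_sub_mul_add_eq_zero htr hdet hμ

theorem stmt_2 (n : ℕ) (M : Matrix (Fin n) (Fin n) ℝ)
    (hM : ∀ μ : ℂ, (Matrix.charpoly (M.map ((↑) : ℝ → ℂ))).IsRoot μ → 0 < μ.re)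
    (u v : EuclideanSpace ℝ (Fin 2))
    (hind : LinearIndependent ℝ ![u, v])
    (C : Matrix (Fin 2) (Fin 2) ℝ)
    (hC : C = !![‖u‖ ^ 2, -⟪u, v⟫_ℝ; -⟪v, u⟫_ℝ, ‖v‖ ^ 2])
    (B : Matrix (Fin 2) (Fin n) ℝ) :
    ∀ μ : ℂ,
      (Matrix.charpoly ((Matrix.fromBlocks M 0 B C).map ((↑) : ℝ → ℂ))).IsRoot μ →
        0 < μ.re := by
  have hgram := Matrix.posDef_gram_of_linearIndependent hind
  have htr : C.trace = (Matrix.gram ℝ ![u, v]).trace := by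
    simp [hC, Matrix.trace_fin_two, Matrix.gram_apply]
  have hdet : C.det = (Matrix.gram ℝ ![u, v]).det := by
    simp [hC, Matrix.det_fin_two, Matrix.gram_apply]
  exact Matrix.IsPositiveStable.fromBlocks_zero₁₂ hM
    (Matrix.isPositiveStable_of_trace_pos_of_det_pos (htr ▸ hgram.trace_pos)
      (hdet ▸ hgram.det_pos)) B
end

section
/- Let z1, z2 be linearly independent vectors in EuclideanSpace ℝ (Fin 3) and set z3 = -z1 - z2. Let A be the real 3×3 matrix A = ![![‖z1‖², 0, 0], ![-⟪z2, z1⟫, ‖z2‖², -⟪z2, z3⟫], ![0, -⟪z3, z2⟫, ‖z3‖²]]. Let w4, w5, w6 be linearly independent vectors in EuclideanSpace ℝ (Fin 3), let G be the 3×3 Gram matrix with entries G i j = ⟪w_i, w_j⟫ for i, j ∈ {4,5,6}, and let B be an arbitrary real 3×3 matrix. Then every complex eigenvalue of the 6×6 block lower-triangular matrix Matrix.fromBlocks A 0 B G (every root in ℂ of its characteristic polynomial) has strictly positive real part; equivalently, its negative is Hurwitz. -/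
/-!
The matrix is block lower triangular, so its characteristic polynomial factors as
`charpoly A * charpoly G`, and `A` is itself block lower triangular with diagonal blocks
`‖z₁‖²` and the Gram matrix of `(z₂, -z₃) = (z₂, z₁ + z₂)`. Gram matrices of linearly independent
vectors are positive definite, so all their eigenvalues are positive reals; the roots of the full
characteristic polynomial are therefore `‖z₁‖²` and eigenvalues of two positive definite matrices.
-/

open scoped InnerProductSpace
open Polynomial Matrix

def Polynomial.PosReRoots (p : ℝ[X]) : Prop :=
  ∀ μ : ℂ, (p.map Complex.ofRealHom).IsRoot μ → 0 < μ.re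

namespace Polynomial.PosReRoots

theorem one : PosReRoots 1 := by
  intro μ hμ
  simp at hμ

theorem mul {p q : ℝ[X]} (hp : p.PosReRoots) (hq : q.PosReRoots) : (p * q).PosReRoots := by
  intro μ hμ
  rw [Polynomial.map_mul, root_mul] at hμ
  exact hμ.elim (hp μ) (hq μ)

theorem X_sub_C {a : ℝ} (ha : 0 < a) : (X - C a).PosReRoots := by
  intro μ hμ
  rw [Polynomial.map_sub, map_X, map_C, IsRoot, eval_sub, eval_X, eval_C, sub_eq_zero] at hμ
  simpa [hμ] using ha

end Polynomial.PosReRoots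

theorem Matrix.PosDef.posReRoots_charpoly {n : Type*} [Fintype n] [DecidableEq n]
    {M : Matrix n n ℝ} (hM : M.PosDef) : M.charpoly.PosReRoots := by
  rw [hM.isHermitian.charpoly_eq]
  exact Finset.prod_induction _ _ (fun _ _ => PosReRoots.mul) PosReRoots.one
    fun i _ => PosReRoots.X_sub_C (hM.eigenvalues_pos i)

theorem Matrix.charpoly_fin_three_eq_X_sub_C_mul_charpoly {R : Type*} [CommRing R]
    (a b c d e f g : R) :
    (!![a, 0, 0; b, c, d; e, f, g]).charpoly = (X - C a) * (!![c, d; f, g]).charpoly := by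
  simp [Matrix.charpoly, det_fin_three, det_fin_two]
  ring

theorem LinearIndependent.pair_snd_add {K V : Type*} [Field K] [AddCommGroup V] [Module K V]
    {x y : V} (h : LinearIndependent K ![x, y]) : LinearIndependent K ![y, x + y] := by
  rw [LinearIndependent.pair_iff] at h ⊢
  intro s t hst
  obtain ⟨ht, hst'⟩ := h t (s + t) (by rw [← hst]; module)
  exact ⟨by simpa [ht] using hst', ht⟩

theorem gram_pair_eq {E : Type*} [NormedAddCommGroup E] [InnerProductSpace ℝ E] (x y : E) :
    gram ℝ ![x, -y] = !![‖x‖ ^ 2, -⟪x, y⟫_ℝ; -⟪y, x⟫_ℝ, ‖y‖ ^ 2] := by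
  ext i j
  fin_cases i <;> fin_cases j <;> simp [gram_apply]

theorem stmt_3 (z1 z2 z3 : EuclideanSpace ℝ (Fin 3))
    (hind : LinearIndependent ℝ ![z1, z2])
    (hz3 : z3 = -z1 - z2)
    (A : Matrix (Fin 3) (Fin 3) ℝ)
    (hA : A = !![‖z1‖ ^ 2, 0, 0;
                 -⟪z2, z1⟫_ℝ, ‖z2‖ ^ 2, -⟪z2, z3⟫_ℝ;
                 0, -⟪z3, z2⟫_ℝ, ‖z3‖ ^ 2])
    (w : Fin 3 → EuclideanSpace ℝ (Fin 3))
    (hw : LinearIndependent ℝ w)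
    (G : Matrix (Fin 3) (Fin 3) ℝ)
    (hG : ∀ i j, G i j = ⟪w i, w j⟫_ℝ)
    (B : Matrix (Fin 3) (Fin 3) ℝ) :
    ∀ μ : ℂ,
      (Matrix.charpoly ((Matrix.fromBlocks A 0 B G).map ((↑) : ℝ → ℂ))).IsRoot μ →
        0 < μ.re := by
  have hz1 : 0 < ‖z1‖ ^ 2 := pow_pos (norm_pos_iff.2 (by simpa using hind.ne_zero 0)) 2
  have hz23 : LinearIndependent ℝ ![z2, -z3] := by
    rw [show -z3 = z1 + z2 by rw [hz3]; abel]
    exact hind.pair_snd_add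
  have hGram : G = gram ℝ w := Matrix.ext hG
  have hroots : (fromBlocks A 0 B G).charpoly.PosReRoots := by
    rw [charpoly_fromBlocks_zero₁₂, hA, charpoly_fin_three_eq_X_sub_C_mul_charpoly,
      ← gram_pair_eq, hGram]
    exact ((PosReRoots.X_sub_C hz1).mul
      (posDef_gram_of_linearIndependent hz23).posReRoots_charpoly).mul
      (posDef_gram_of_linearIndependent hw).posReRoots_charpoly
  intro μ hμ
  exact hroots μ (by rwa [← charpoly_map])
end

section
/- Let M be a real n×n skew-symmetric matrix (Mᵀ = -M), let B be a real n×1 matrix (a column vector), and assume the pair (Bᵀ, M) is observable, i.e., for every nonzero vector v ∈ ℝⁿ there exists a natural number k such that Bᵀ * Mᵏ applied to v is nonzero. Then for every κ > 0, every complex eigenvalue of the matrix M - κ • (B * Bᵀ) (every root in ℂ of its characteristic polynomial) has strictly negative real part. -/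
/-!
Let `A = M - κ B Bᵀ` and let `A v = μ v` with `v ≠ 0` in `ℂⁿ`. Since `M` is skew-symmetric,
`v* M v` is purely imaginary, so taking real parts of `v* A v = μ ‖v‖²` gives
`Re μ ‖v‖² = -κ ‖Bᵀ v‖² ≤ 0`. If `Re μ = 0`, then `Bᵀ v = 0`, hence `M v = μ v` and
`Bᵀ Mᵏ v = μᵏ Bᵀ v = 0` for all `k`, contradicting observability (applied to the real or the
imaginary part of `v`).
-/

open Matrix

namespace Matrix

theorem exists_mulVec_eq_smul_of_isRoot_charpoly {ι K : Type*} [Fintype ι] [DecidableEq ι]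
    [Field K] {A : Matrix ι ι K} {μ : K} (h : A.charpoly.IsRoot μ) :
    ∃ v, v ≠ 0 ∧ A *ᵥ v = μ • v := by
  rw [← charpoly_toLin', ← Module.End.hasEigenvalue_iff_isRoot_charpoly] at h
  obtain ⟨v, hv⟩ := h.exists_hasEigenvector
  exact ⟨v, hv.2, by simpa using hv.apply_eq_smul⟩

theorem pow_mulVec_eq_smul {ι R : Type*} [Fintype ι] [DecidableEq ι] [CommRing R]
    {M : Matrix ι ι R} {μ : R} {v : ι → R} (h : M *ᵥ v = μ • v) (k : ℕ) :
    M ^ k *ᵥ v = μ ^ k • v := by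
  induction k with
  | zero => simp
  | succ k ih => rw [pow_succ', ← mulVec_mulVec, ih, mulVec_smul, h, smul_smul, ← pow_succ]

theorem star_dotProduct_mul_conjTranspose_mulVec {ι m R : Type*} [Fintype ι] [Fintype m]
    [NonUnitalSemiring R] [StarRing R] (B : Matrix ι m R) (v : ι → R) :
    star v ⬝ᵥ (B * Bᴴ) *ᵥ v = star (Bᴴ *ᵥ v) ⬝ᵥ Bᴴ *ᵥ v := by
  rw [← mulVec_mulVec, dotProduct_mulVec, star_mulVec, conjTranspose_conjTranspose]

section RCLike

open RCLike
open scoped ComplexOrder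

variable {ι m 𝕜 : Type*} [Fintype ι] [Fintype m] [RCLike 𝕜]

theorem re_star_dotProduct_mulVec_eq_zero {M : Matrix ι ι 𝕜} (hM : Mᴴ = -M) (v : ι → 𝕜) :
    re (star v ⬝ᵥ M *ᵥ v) = 0 := by
  have h : star (star v ⬝ᵥ M *ᵥ v) = -(star v ⬝ᵥ M *ᵥ v) := by
    rw [← star_dotProduct, star_mulVec, ← dotProduct_mulVec, hM, neg_mulVec, dotProduct_neg]
  have := congrArg re h
  rw [star_def, conj_re, map_neg] at this
  linarith

theorem im_star_dotProduct_self (v : ι → 𝕜) : im (star v ⬝ᵥ v) = 0 :=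
  (nonneg_iff.1 (dotProduct_star_self_nonneg v)).2

variable {M : Matrix ι ι 𝕜} {B : Matrix ι m 𝕜} {κ : ℝ} {μ : 𝕜} {v : ι → 𝕜}

theorem re_mul_re_star_dotProduct_self (hM : Mᴴ = -M) (hv : (M - κ • (B * Bᴴ)) *ᵥ v = μ • v) :
    re μ * re (star v ⬝ᵥ v) = -κ * re (star (Bᴴ *ᵥ v) ⬝ᵥ Bᴴ *ᵥ v) := by
  have h := congrArg (fun w => re (star v ⬝ᵥ w)) hv
  simp only [sub_mulVec, smul_mulVec, dotProduct_sub, dotProduct_smul, map_sub, smul_re,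
    re_star_dotProduct_mulVec_eq_zero hM, star_dotProduct_mul_conjTranspose_mulVec, smul_eq_mul,
    mul_re, im_star_dotProduct_self, mul_zero, sub_zero] at h
  linarith

theorem re_lt_zero_of_mulVec_eq_smul [DecidableEq ι] (hM : Mᴴ = -M) (hκ : 0 < κ)
    (hobs : ∀ w : ι → 𝕜, w ≠ 0 → ∃ k : ℕ, (Bᴴ * M ^ k) *ᵥ w ≠ 0)
    (hv0 : v ≠ 0) (hv : (M - κ • (B * Bᴴ)) *ᵥ v = μ • v) : re μ < 0 := by
  have hd : 0 < re (star v ⬝ᵥ v) := (pos_iff.1 (dotProduct_star_self_pos_iff.2 hv0)).1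
  have he : 0 ≤ re (star (Bᴴ *ᵥ v) ⬝ᵥ Bᴴ *ᵥ v) := (nonneg_iff.1 (dotProduct_star_self_nonneg _)).1
  have key := re_mul_re_star_dotProduct_self hM hv
  refine lt_of_le_of_ne (nonpos_of_mul_nonpos_left (by nlinarith) hd) fun hμ => ?_
  have hBv : Bᴴ *ᵥ v = 0 := by
    have he0 : re (star (Bᴴ *ᵥ v) ⬝ᵥ Bᴴ *ᵥ v) = 0 := by
      rw [hμ, zero_mul] at key
      simpa [hκ.ne'] using key
    exact dotProduct_star_self_eq_zero.1
      (RCLike.ext (by rw [he0, map_zero]) (by rw [im_star_dotProduct_self, map_zero]))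
  have hMv : M *ᵥ v = μ • v := by
    rwa [sub_mulVec, smul_mulVec, ← mulVec_mulVec, hBv, mulVec_zero, smul_zero, sub_zero] at hv
  obtain ⟨k, hk⟩ := hobs v hv0
  exact hk (by rw [← mulVec_mulVec, pow_mulVec_eq_smul hMv, mulVec_smul, hBv, smul_zero])

end RCLike

theorem re_map_ofReal_mulVec {ι m : Type*} [Fintype ι] (N : Matrix m ι ℝ) (v : ι → ℂ) (i : m) :
    ((N.map ((↑) : ℝ → ℂ) *ᵥ v) i).re = (N *ᵥ fun j => (v j).re) i := by
  simp [mulVec, dotProduct, Complex.re_sum]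

theorem im_map_ofReal_mulVec {ι m : Type*} [Fintype ι] (N : Matrix m ι ℝ) (v : ι → ℂ) (i : m) :
    ((N.map ((↑) : ℝ → ℂ) *ᵥ v) i).im = (N *ᵥ fun j => (v j).im) i := by
  simp [mulVec, dotProduct, Complex.im_sum]

theorem exists_map_ofReal_mulVec_ne_zero {α ι m : Type*} [Fintype ι] {N : α → Matrix m ι ℝ}
    (h : ∀ v : ι → ℝ, v ≠ 0 → ∃ a, N a *ᵥ v ≠ 0) {v : ι → ℂ} (hv : v ≠ 0) :
    ∃ a, (N a).map ((↑) : ℝ → ℂ) *ᵥ v ≠ 0 := by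
  have hker : ∀ w, (∀ a, N a *ᵥ w = 0) → w = 0 := fun w hw =>
    by_contra fun hw0 => (h w hw0).elim fun a ha => ha (hw a)
  by_contra! hN
  have hre := hker _ fun a => funext fun i => by rw [← re_map_ofReal_mulVec, hN a]; rfl
  have him := hker _ fun a => funext fun i => by rw [← im_map_ofReal_mulVec, hN a]; rfl
  exact hv (funext fun j => Complex.ext (congrFun hre j) (congrFun him j))

theorem conjTranspose_map_ofReal {m ι : Type*} (N : Matrix m ι ℝ) :
    (N.map ((↑) : ℝ → ℂ))ᴴ = Nᵀ.map (↑) := by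
  rw [← conjTranspose_map _ fun r => (Complex.conj_ofReal r).symm,
    conjTranspose_eq_transpose_of_trivial]

end Matrix

theorem stmt_8 (n : ℕ) (M : Matrix (Fin n) (Fin n) ℝ)
    (hskew : Mᵀ = -M)
    (B : Matrix (Fin n) (Fin 1) ℝ)
    (hobs : ∀ v : Fin n → ℝ, v ≠ 0 → ∃ k : ℕ, (Bᵀ * M ^ k) *ᵥ v ≠ 0) :
    ∀ κ : ℝ, 0 < κ →
      ∀ μ : ℂ,
        (Matrix.charpoly ((M - κ • (B * Bᵀ)).map ((↑) : ℝ → ℂ))).IsRoot μ →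
          μ.re < 0 := by
  intro κ hκ μ hroot
  obtain ⟨v, hv0, hv⟩ := exists_mulVec_eq_smul_of_isRoot_charpoly hroot
  have hmap : (M - κ • (B * Bᵀ)).map ((↑) : ℝ → ℂ)
      = M.map (↑) - κ • (B.map (↑) * (B.map (↑))ᴴ) := by
    rw [conjTranspose_map_ofReal, Matrix.map_sub _ (by simp), Matrix.map_smul _ _ (by simp)]
    exact congrArg _ (congrArg _ (Matrix.map_mul (f := Complex.ofRealHom)))
  have hMskew : (M.map ((↑) : ℝ → ℂ))ᴴ = -M.map (↑) := by
    rw [conjTranspose_map_ofReal, hskew, Matrix.map_neg _ Complex.ofReal_neg]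
  refine re_lt_zero_of_mulVec_eq_smul hMskew hκ (fun w hw => ?_) hv0 (hmap ▸ hv)
  obtain ⟨k, hk⟩ := exists_map_ofReal_mulVec_ne_zero hobs hw
  refine ⟨k, ?_⟩
  have hmul : (Bᵀ * M ^ k).map ((↑) : ℝ → ℂ) = Bᵀ.map (↑) * M.map (↑) ^ k :=
    (Matrix.map_mul (f := Complex.ofRealHom)).trans
      (congrArg _ (Matrix.map_pow M Complex.ofRealHom k))
  rw [conjTranspose_map_ofReal]
  convert hk using 2
  exact hmul.symm
end

section
/- Let z1, z2 be linearly independent vectors in EuclideanSpace ℝ (Fin 2) and set z3 = -z1 - z2. Then the symmetric real 3×3 matrix G = ![![2‖z1‖², -⟪z1, z2⟫, -⟪z1, z3⟫], ![-⟪z1, z2⟫, 2‖z2‖², -⟪z2, z3⟫], ![-⟪z1, z3⟫, -⟪z2, z3⟫, 2‖z3‖²]] is positive definite, i.e., xᵀGx > 0 for every nonzero x ∈ ℝ³. -/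
/-!
`G = R Rᵀ` for the rigidity matrix `R` of the triangle, so `xᵀ G x = ‖Rᵀ x‖²` is the sum of the
squared norms of `x₀ z₁ - x₂ z₃`, `x₁ z₂ - x₀ z₁` and `x₂ z₃ - x₁ z₂`. Since `z₃ = -z₁ - z₂`,
the first two vanishing forces `x = 0` by the linear independence of `z₁, z₂`.
-/

open Matrix
open scoped InnerProductSpace

section
variable {E : Type*} [NormedAddCommGroup E] [InnerProductSpace ℝ E]

theorem dotProduct_mulVec_triangle_eq_sum_norm_sq (z1 z2 z3 : E) (x : Fin 3 → ℝ) :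
    x ⬝ᵥ (!![2 * ‖z1‖ ^ 2, -⟪z1, z2⟫_ℝ, -⟪z1, z3⟫_ℝ;
              -⟪z1, z2⟫_ℝ, 2 * ‖z2‖ ^ 2, -⟪z2, z3⟫_ℝ;
              -⟪z1, z3⟫_ℝ, -⟪z2, z3⟫_ℝ, 2 * ‖z3‖ ^ 2] *ᵥ x) =
      ‖x 0 • z1 - x 2 • z3‖ ^ 2 + ‖x 1 • z2 - x 0 • z1‖ ^ 2 + ‖x 2 • z3 - x 1 • z2‖ ^ 2 := by
  simp only [norm_sub_sq_real, norm_smul, mul_pow, Real.norm_eq_abs, sq_abs,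
    real_inner_smul_left, real_inner_smul_right, dotProduct, mulVec, Fin.sum_univ_three,
    of_apply, cons_val', cons_val_zero, cons_val_one, cons_val_two, empty_val',
    cons_val_fin_one, Nat.succ_eq_add_one, Nat.reduceAdd, tail_cons, vecHead]
  rw [real_inner_comm z2 z1, real_inner_comm z3 z2, real_inner_comm z3 z1]
  ring

theorem eq_zero_of_smul_sub_smul_eq_zero {z1 z2 z3 : E} (hind : LinearIndependent ℝ ![z1, z2])
    (hz3 : z3 = -z1 - z2) {x : Fin 3 → ℝ} (h02 : x 0 • z1 - x 2 • z3 = 0)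
    (h10 : x 1 • z2 - x 0 • z1 = 0) : x = 0 := by
  have hx02 : x 0 + x 2 = 0 ∧ x 2 = 0 :=
    LinearIndependent.pair_iff.1 hind _ _ (by rw [← h02, hz3]; module)
  have hx0 : x 0 = 0 := by linarith [hx02.1, hx02.2]
  have hx1 : x 1 = 0 :=
    (LinearIndependent.pair_iff.1 hind 0 (x 1) (by rw [← h10, hx0]; module)).2
  ext i
  fin_cases i <;> simp [hx0, hx1, hx02.2]

end

theorem stmt_10 (z1 z2 z3 : EuclideanSpace ℝ (Fin 2))
    (hind : LinearIndependent ℝ ![z1, z2])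
    (hz3 : z3 = -z1 - z2)
    (G : Matrix (Fin 3) (Fin 3) ℝ)
    (hG : G = !![2 * ‖z1‖ ^ 2, -⟪z1, z2⟫_ℝ, -⟪z1, z3⟫_ℝ;
                 -⟪z1, z2⟫_ℝ, 2 * ‖z2‖ ^ 2, -⟪z2, z3⟫_ℝ;
                 -⟪z1, z3⟫_ℝ, -⟪z2, z3⟫_ℝ, 2 * ‖z3‖ ^ 2]) :
    ∀ x : Fin 3 → ℝ, x ≠ 0 → 0 < x ⬝ᵥ (G *ᵥ x) := by
  intro x hx
  rw [hG, dotProduct_mulVec_triangle_eq_sum_norm_sq]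
  have hne : x 0 • z1 - x 2 • z3 ≠ 0 ∨ x 1 • z2 - x 0 • z1 ≠ 0 := by
    by_contra! h
    exact hx (eq_zero_of_smul_sub_smul_eq_zero hind hz3 h.1 h.2)
  rcases hne with h | h <;> have := pow_pos (norm_pos_iff.2 h) 2 <;> positivity
end

section
/- Let F and G be real e×e matrices and suppose every complex eigenvalue of F (every root in ℂ of its characteristic polynomial) has strictly negative real part. Then there exists c* > 0 such that for every real c > c*, every complex eigenvalue of the 2e×2e block matrix Matrix.fromBlocks F G F (G - c • 1) has strictly negative real part. -/
open Matrix Polynomial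

attribute [local instance] Matrix.linftyOpNormedRing Matrix.linftyOpNormedAlgebra

private lemma eval_charpoly_aux {n : Type*} [Fintype n] [DecidableEq n]
    (M : Matrix n n ℂ) (μ : ℂ) :
    M.charpoly.eval μ = (μ • (1 : Matrix n n ℂ) - M).det := by
  rw [Matrix.charpoly, ← coe_evalRingHom, RingHom.map_det]
  congr 1
  ext i j
  by_cases h : i = j <;>
    simp [h, charmatrix_apply, Matrix.one_apply, Matrix.diagonal_apply]

private lemma det_block_aux (e : ℕ) (F' G' : Matrix (Fin e) (Fin e) ℂ) (μ c' : ℂ)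
    (hc : μ + c' ≠ 0) :
    (μ • (1 : Matrix (Fin e ⊕ Fin e) (Fin e ⊕ Fin e) ℂ)
        - fromBlocks F' G' F' (G' - c' • 1)).det
      = (μ + c') ^ e * (μ • 1 - F' - (μ / (μ + c')) • G').det := by
  have h1 : μ • (1 : Matrix (Fin e ⊕ Fin e) (Fin e ⊕ Fin e) ℂ)
      - fromBlocks F' G' F' (G' - c' • 1)
      = fromBlocks (μ • 1 - F') (-G') (-F') (μ • 1 - (G' - c' • 1)) := by
    rw [← fromBlocks_one, fromBlocks_smul, sub_eq_add_neg, fromBlocks_neg, fromBlocks_add]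
    simp [sub_eq_add_neg]
  set s : ℂ := μ / (μ + c') with hs
  set M := fromBlocks (μ • 1 - F') (-G') (-F') (μ • 1 - (G' - c' • 1)) with hM
  have hE : (fromBlocks 1 0 (-1) 1 : Matrix (Fin e ⊕ Fin e) (Fin e ⊕ Fin e) ℂ) * M *
      fromBlocks 1 0 (s • 1) 1
      = fromBlocks (μ • 1 - F' - s • G') (-G') 0 ((μ + c') • 1) := by
    rw [hM, fromBlocks_multiply, fromBlocks_multiply, fromBlocks_inj]
    refine ⟨?_, ?_, ?_, ?_⟩ <;>
      simp only [Matrix.mul_smul, Matrix.mul_one, Matrix.one_mul, Matrix.zero_mul,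
        Matrix.mul_zero, neg_one_mul, add_zero, zero_add, smul_smul] <;>
      match_scalars <;> (try simp only [hs]) <;> field_simp <;> ring
  have hdet := congrArg Matrix.det hE
  rw [Matrix.det_mul, Matrix.det_mul, det_fromBlocks_zero₁₂, det_fromBlocks_zero₁₂,
    det_fromBlocks_zero₂₁, Matrix.det_one, Matrix.det_smul, Matrix.det_one] at hdet
  rw [h1]
  simpa [Fintype.card_fin, mul_comm] using hdet

theorem stmt_12 (e : ℕ) (F G : Matrix (Fin e) (Fin e) ℝ)
    (hF : ∀ μ : ℂ, (Matrix.charpoly (F.map ((↑) : ℝ → ℂ))).IsRoot μ → μ.re < 0) :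
    ∃ cstar : ℝ, 0 < cstar ∧ ∀ c : ℝ, cstar < c →
      ∀ μ : ℂ,
        (Matrix.charpoly
          ((Matrix.fromBlocks F G F (G - c • (1 : Matrix (Fin e) (Fin e) ℝ))).map
            ((↑) : ℝ → ℂ))).IsRoot μ → μ.re < 0 := by
  set F' : Matrix (Fin e) (Fin e) ℂ := F.map ((↑) : ℝ → ℂ) with hF'
  set G' : Matrix (Fin e) (Fin e) ℂ := G.map ((↑) : ℝ → ℂ) with hG'
  -- the resolvent is nonsingular on the closed right half plane
  have hdetF : ∀ μ : ℂ, 0 ≤ μ.re → (μ • (1 : Matrix (Fin e) (Fin e) ℂ) - F').det ≠ 0 := by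
    intro μ hμ h0
    have : (Matrix.charpoly F').IsRoot μ := by
      rw [Polynomial.IsRoot, eval_charpoly_aux]; exact h0
    exact absurd (hF μ this) (not_lt.2 hμ)
  have hone : ‖(1 : Matrix (Fin e) (Fin e) ℂ)‖ ≤ 1 := by
    rw [← Matrix.diagonal_one, Matrix.linfty_opNorm_diagonal]
    simpa using pi_norm_const_le (1 : ℂ)
  set r : ℝ := 2 * ‖F'‖ + 1 with hr
  have hrpos : 0 < r := by positivity
  -- bound on ‖μ • (μ•1 - F')⁻¹‖ in the far region
  have hfar : ∀ μ : ℂ, 0 ≤ μ.re → r ≤ ‖μ‖ →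
      ‖μ • (μ • (1 : Matrix (Fin e) (Fin e) ℂ) - F')⁻¹‖ ≤ 2 := by
    intro μ hμre hμ
    have hμ0 : μ ≠ 0 := by
      intro h; rw [h, norm_zero] at hμ; linarith
    set A := μ • (1 : Matrix (Fin e) (Fin e) ℂ) - F' with hA
    set x := μ⁻¹ • F' with hx
    have hμpos : 0 < ‖μ‖ := lt_of_lt_of_le hrpos hμ
    have hxn : ‖x‖ ≤ 1 / 2 := by
      rw [hx, norm_smul, norm_inv, inv_mul_le_iff₀ hμpos]
      have : 2 * ‖F'‖ + 1 ≤ ‖μ‖ := hμ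
      nlinarith
    have hAx : μ • ((1 : Matrix (Fin e) (Fin e) ℂ) - x) = A := by
      rw [hx, hA, smul_sub, smul_smul, mul_inv_cancel₀ hμ0, one_smul]
    set W := μ • A⁻¹ with hW
    have hWx : W * (1 - x) = 1 := by
      rw [hW, Matrix.smul_mul, ← Matrix.mul_smul, hAx]
      exact Matrix.nonsing_inv_mul A (isUnit_iff_ne_zero.2 (hdetF μ hμre))
    have hW1 : W = 1 + W * x := by
      have := hWx
      rw [Matrix.mul_sub, Matrix.mul_one] at this
      linear_combination (norm := abel) this
    have hWnorm : ‖W‖ ≤ 1 + ‖W‖ * (1/2) := by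
      calc ‖W‖ = ‖1 + W * x‖ := by rw [← hW1]
        _ ≤ ‖(1 : Matrix (Fin e) (Fin e) ℂ)‖ + ‖W * x‖ := norm_add_le _ _
        _ ≤ 1 + ‖W‖ * ‖x‖ := add_le_add hone (norm_mul_le _ _)
        _ ≤ 1 + ‖W‖ * (1/2) := by
            exact add_le_add le_rfl (mul_le_mul_of_nonneg_left hxn (norm_nonneg _))
    linarith
  -- bound on the compact part
  have hcompact : ∃ K2 : ℝ, 0 < K2 ∧ ∀ μ : ℂ, 0 ≤ μ.re → ‖μ‖ ≤ r →
      ‖μ • (μ • (1 : Matrix (Fin e) (Fin e) ℂ) - F')⁻¹‖ ≤ K2 := by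
    set K : Set ℂ := {μ | 0 ≤ μ.re ∧ ‖μ‖ ≤ r} with hK
    have hKc : IsCompact K := by
      apply (isCompact_closedBall (0:ℂ) r).of_isClosed_subset
      · exact (isClosed_le continuous_const Complex.continuous_re).inter
          (isClosed_le continuous_norm continuous_const)
      · intro μ hμ
        simpa [Metric.mem_closedBall, Complex.dist_eq] using hμ.2
    have hK0 : (0:ℂ) ∈ K := ⟨le_refl 0, by simpa using le_of_lt hrpos⟩
    have hcont1 : Continuous fun μ : ℂ =>
        ‖μ • (μ • (1 : Matrix (Fin e) (Fin e) ℂ) - F').adjugate‖ :=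
      (continuous_id.smul
        (((continuous_id.smul continuous_const).sub continuous_const).matrix_adjugate)).norm
    have hcont2 : Continuous fun μ : ℂ =>
        ‖(μ • (1 : Matrix (Fin e) (Fin e) ℂ) - F').det‖ :=
      (((continuous_id.smul continuous_const).sub continuous_const).matrix_det).norm
    obtain ⟨μ₀, _, hμ₀'⟩ := hKc.exists_isMaxOn ⟨0, hK0⟩ hcont1.continuousOn
    obtain ⟨μ₁, hμ₁K, hμ₁'⟩ := hKc.exists_isMinOn ⟨0, hK0⟩ hcont2.continuousOn
    have hμ₀ := isMaxOn_iff.1 hμ₀'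
    have hμ₁ := isMinOn_iff.1 hμ₁'
    set N1 := ‖μ₀ • (μ₀ • (1 : Matrix (Fin e) (Fin e) ℂ) - F').adjugate‖ with hN1
    set m := ‖(μ₁ • (1 : Matrix (Fin e) (Fin e) ℂ) - F').det‖ with hm
    have hmpos : 0 < m := by
      rw [hm]
      exact norm_pos_iff.2 (hdetF μ₁ hμ₁K.1)
    refine ⟨N1 / m + 1, by positivity, ?_⟩
    intro μ hμre hμr
    have hμK : μ ∈ K := ⟨hμre, hμr⟩
    have hdet : (μ • (1 : Matrix (Fin e) (Fin e) ℂ) - F').det ≠ 0 := hdetF μ hμre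
    have hinv : (μ • (1 : Matrix (Fin e) (Fin e) ℂ) - F')⁻¹
        = ((μ • (1 : Matrix (Fin e) (Fin e) ℂ) - F').det)⁻¹ •
          (μ • (1 : Matrix (Fin e) (Fin e) ℂ) - F').adjugate := by
      rw [Matrix.inv_def, Ring.inverse_eq_inv']
    have : ‖μ • (μ • (1 : Matrix (Fin e) (Fin e) ℂ) - F')⁻¹‖
        = ‖(μ • (1 : Matrix (Fin e) (Fin e) ℂ) - F').det‖⁻¹ *
          ‖μ • (μ • (1 : Matrix (Fin e) (Fin e) ℂ) - F').adjugate‖ := by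
      rw [hinv, smul_comm, norm_smul, norm_inv]
    rw [this]
    have h1 : ‖μ • (μ • (1 : Matrix (Fin e) (Fin e) ℂ) - F').adjugate‖ ≤ N1 := hμ₀ μ hμK
    have h2 : m ≤ ‖(μ • (1 : Matrix (Fin e) (Fin e) ℂ) - F').det‖ := hμ₁ μ hμK
    have h3 : ‖(μ • (1 : Matrix (Fin e) (Fin e) ℂ) - F').det‖⁻¹ ≤ m⁻¹ := by
      exact inv_anti₀ hmpos h2
    calc ‖(μ • (1 : Matrix (Fin e) (Fin e) ℂ) - F').det‖⁻¹ *
          ‖μ • (μ • (1 : Matrix (Fin e) (Fin e) ℂ) - F').adjugate‖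
        ≤ m⁻¹ * N1 := by
          apply mul_le_mul h3 h1 (norm_nonneg _) (by positivity)
      _ = N1 / m := by rw [div_eq_inv_mul]
      _ ≤ N1 / m + 1 := by linarith
  obtain ⟨K2, hK2pos, hK2⟩ := hcompact
  set K' : ℝ := max 2 K2 with hK'
  have hK'pos : (1:ℝ) ≤ K' := le_trans (by norm_num) (le_max_left _ _)
  have hWbound : ∀ μ : ℂ, 0 ≤ μ.re →
      ‖μ • (μ • (1 : Matrix (Fin e) (Fin e) ℂ) - F')⁻¹‖ ≤ K' := by
    intro μ hμre
    rcases le_total ‖μ‖ r with h | h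
    · exact le_trans (hK2 μ hμre h) (le_max_right _ _)
    · exact le_trans (hfar μ hμre h) (le_max_left _ _)
  refine ⟨max 1 (K' * ‖G'‖), lt_of_lt_of_le one_pos (le_max_left _ _), ?_⟩
  intro c hc μ hroot
  by_contra hre
  push_neg at hre
  set cstar := max 1 (K' * ‖G'‖) with hcstar
  have hc1 : (1:ℝ) < c := lt_of_le_of_lt (le_max_left _ _) hc
  have hcpos : (0:ℝ) < c := by linarith
  -- rewrite the root as a determinant identity
  have h2 : (Matrix.fromBlocks F G F (G - c • (1 : Matrix (Fin e) (Fin e) ℝ))).map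
      ((↑) : ℝ → ℂ) = fromBlocks F' G' F' (G' - (c:ℂ) • 1) := by
    rw [fromBlocks_map, fromBlocks_inj]
    refine ⟨rfl, rfl, rfl, ?_⟩
    ext i j
    by_cases h : i = j <;>
      simp [h, hG', Matrix.map_apply, Matrix.sub_apply, Matrix.smul_apply, Matrix.one_apply]
  have hcne : μ + (c:ℂ) ≠ 0 := by
    intro h
    have : (μ + (c:ℂ)).re = 0 := by rw [h]; simp
    simp only [Complex.add_re, Complex.ofReal_re] at this
    linarith
  have hcabs : c ≤ ‖μ + (c:ℂ)‖ := by
    calc c = (0:ℝ) + c := by ring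
      _ ≤ μ.re + c := by linarith
      _ = (μ + (c:ℂ)).re := by simp
      _ ≤ ‖μ + (c:ℂ)‖ := Complex.re_le_norm _
      _ = ‖μ + (c:ℂ)‖ := rfl
  have hroot' : ((fromBlocks F' G' F' (G' - (c:ℂ) • 1)).charpoly).eval μ = 0 := by
    rw [← h2]; exact hroot
  rw [eval_charpoly_aux, det_block_aux e F' G' μ (c:ℂ) hcne] at hroot'
  -- now derive a contradiction: both factors are nonzero
  set A := μ • (1 : Matrix (Fin e) (Fin e) ℂ) - F' with hA
  have hdetA : A.det ≠ 0 := hdetF μ hre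
  have hAunit : IsUnit A.det := isUnit_iff_ne_zero.2 hdetA
  set s : ℂ := μ / (μ + (c:ℂ)) with hs
  set N := s • (A⁻¹ * G') with hN
  have hfact : μ • (1 : Matrix (Fin e) (Fin e) ℂ) - F' - s • G' = A * (1 - N) := by
    rw [hN, Matrix.mul_sub, Matrix.mul_one, Matrix.mul_smul, ← Matrix.mul_assoc,
      Matrix.mul_nonsing_inv A hAunit, Matrix.one_mul, hA]
  have hNlt : ‖N‖ < 1 := by
    have hsn : ‖s‖ = ‖μ‖ / ‖μ + (c:ℂ)‖ := by rw [hs, norm_div]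
    have hWle := hWbound μ hre
    rw [norm_smul] at hWle ⊢
    have hG0 : (0:ℝ) ≤ ‖G'‖ := norm_nonneg _
    have h4 : ‖A⁻¹ * G'‖ ≤ ‖A⁻¹‖ * ‖G'‖ := norm_mul_le _ _
    have habs : 0 < ‖μ + (c:ℂ)‖ := lt_of_lt_of_le hcpos hcabs
    have h5 : ‖μ‖ * ‖A⁻¹‖ * ‖G'‖ ≤ cstar := by
      calc ‖μ‖ * ‖A⁻¹‖ * ‖G'‖ ≤ K' * ‖G'‖ := by
            apply mul_le_mul_of_nonneg_right hWle hG0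
        _ ≤ cstar := le_max_right _ _
    calc ‖s‖ * ‖A⁻¹ * G'‖ ≤ ‖s‖ * (‖A⁻¹‖ * ‖G'‖) := by
          apply mul_le_mul_of_nonneg_left h4 (norm_nonneg _)
      _ = (‖μ‖ * ‖A⁻¹‖ * ‖G'‖) / ‖μ + (c:ℂ)‖ := by rw [hsn]; ring
      _ ≤ cstar / ‖μ + (c:ℂ)‖ := by gcongr
      _ ≤ cstar / c := by
          have hcst0 : (0:ℝ) ≤ cstar := le_trans zero_le_one (le_max_left _ _)
          gcongr
      _ < 1 := (div_lt_one hcpos).2 hc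
  have hunit : IsUnit ((1 : Matrix (Fin e) (Fin e) ℂ) - N) :=
    isUnit_one_sub_of_norm_lt_one hNlt
  have hdet1N : ((1 : Matrix (Fin e) (Fin e) ℂ) - N).det ≠ 0 :=
    ((Matrix.isUnit_iff_isUnit_det _).1 hunit).ne_zero
  have : (μ + (c:ℂ)) ^ e * (μ • 1 - F' - s • G').det ≠ 0 := by
    apply mul_ne_zero (pow_ne_zero _ hcne)
    rw [hfact, Matrix.det_mul]
    exact mul_ne_zero hdetA hdet1N
  exact this hroot'
end
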